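/- Let G be a finite connected non-complete simple graph. Then μt(G) = n(G) − γc(G) if and only if there exists a minimum connected dominating set S of G such that for every pair u,v of vertices of G there exists a shortest path u = y_0,…,y_{k'} = v whose internal vertices y_1,…,y_{k'−1} all belong to S. -/

import Mathlib

open SimpleGraph

/-- `X` is a total mutual-visibility set of `G`: every two vertices of `G` are `X`-visible,
i.e. joined by a shortest path whose internal vertices avoid `X`. -/
def IsTMVSet {V : Type*} (G : SimpleGraph V) (X : Set V) : Prop :=
  ∀ x y : V, ∃ p : G.Walk x y, p.length = G.dist x y ∧
    ∀ w ∈ p.support, w ≠ x → w ≠ y → w ∉ X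

/-- The total mutual-visibility number of `G`. -/
noncomputable def muT {V : Type*} (G : SimpleGraph V) : ℕ :=
  sSup {n : ℕ | ∃ X : Set V, IsTMVSet G X ∧ X.ncard = n}

/-- `D` is a dominating set of `G`. -/
def IsDomSet {V : Type*} (G : SimpleGraph V) (D : Set V) : Prop :=
  ∀ v : V, v ∉ D → ∃ u ∈ D, G.Adj u v

/-- The domination number of `G`. -/
noncomputable def gammaDom {V : Type*} (G : SimpleGraph V) : ℕ :=
  sInf {n : ℕ | ∃ D : Set V, IsDomSet G D ∧ D.ncard = n}

/-- `D` is a connected dominating set of `G`. -/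
def IsConnDomSet {V : Type*} (G : SimpleGraph V) (D : Set V) : Prop :=
  IsDomSet G D ∧ (G.induce D).Connected

/-- The connected domination number of `G`. -/
noncomputable def gammaConnDom {V : Type*} (G : SimpleGraph V) : ℕ :=
  sInf {n : ℕ | ∃ D : Set V, IsConnDomSet G D ∧ D.ncard = n}

/-- The closed neighborhood of a vertex. -/
def closedNbhd {V : Type*} (G : SimpleGraph V) (v : V) : Set V :=
  insert v (G.neighborSet v)

/-- The set of simplicial vertices of `G`. -/
def simpSet {V : Type*} (G : SimpleGraph V) : Set V :=
  {v | G.IsClique (G.neighborSet v)}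

/-- The set `P(G)` of vertices that appear as the unique common closed neighbor of
two vertices. -/
def pSet {V : Type*} (G : SimpleGraph V) : Set V :=
  {v | ∃ u w : V, closedNbhd G u ∩ closedNbhd G w = {v}}

/-- The set `C(G)` of vertices belonging to every maximum total mutual-visibility set. -/
def compulsorySet {V : Type*} (G : SimpleGraph V) : Set V :=
  {v | ∀ X : Set V, IsTMVSet G X → X.ncard = muT G → v ∈ X}

/-- The set `F(G)` of vertices belonging to no maximum total mutual-visibility set. -/
def forbiddenSet {V : Type*} (G : SimpleGraph V) : Set V :=
  {v | ∀ X : Set V, IsTMVSet G X → X.ncard = muT G → v ∉ X}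

/-- The independent total mutual-visibility number of `G`. -/
noncomputable def muIT {V : Type*} (G : SimpleGraph V) : ℕ :=
  sSup {n : ℕ | ∃ X : Set V, IsTMVSet G X ∧ (∀ u ∈ X, ∀ v ∈ X, ¬ G.Adj u v) ∧ X.ncard = n}

/-- The join `G + H` of two graphs. -/
def joinGraph {V W : Type*} (G : SimpleGraph V) (H : SimpleGraph W) :
    SimpleGraph (V ⊕ W) :=
  SimpleGraph.fromRel (fun x y =>
    (∃ a b, x = Sum.inl a ∧ y = Sum.inl b ∧ G.Adj a b) ∨
    (∃ a b, x = Sum.inr a ∧ y = Sum.inr b ∧ H.Adj a b) ∨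
    (∃ a b, x = Sum.inl a ∧ y = Sum.inr b))

/-- The corona product `G ⊙ H`: a copy of `G` together with a copy `Hᵢ` of `H` for each
vertex `uᵢ` of `G`, where `uᵢ` is joined to all vertices of `Hᵢ`. -/
def coronaProd {V W : Type*} (G : SimpleGraph V) (H : SimpleGraph W) :
    SimpleGraph (V ⊕ V × W) :=
  SimpleGraph.fromRel (fun x y =>
    (∃ a b, x = Sum.inl a ∧ y = Sum.inl b ∧ G.Adj a b) ∨
    (∃ i w w', x = Sum.inr (i, w) ∧ y = Sum.inr (i, w') ∧ H.Adj w w') ∨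
    (∃ i w, x = Sum.inl i ∧ y = Sum.inr (i, w)))

/-- The lexicographic product `G ∘ H`. -/
def lexProd {V W : Type*} (G : SimpleGraph V) (H : SimpleGraph W) :
    SimpleGraph (V × W) where
  Adj x y := G.Adj x.1 y.1 ∨ (x.1 = y.1 ∧ H.Adj x.2 y.2)
  symm := ⟨fun x y h => by
    rcases h with h | ⟨h1, h2⟩
    · exact Or.inl h.symm
    · exact Or.inr ⟨h1.symm, h2.symm⟩⟩
  loopless := ⟨fun x h => by
    rcases h with h | ⟨_, h⟩
    · exact G.irrefl h
    · exact H.irrefl h⟩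

/-- `B` induces a 2-connected subgraph of `G`. -/
def IsTwoConnSet {V : Type*} (G : SimpleGraph V) (B : Set V) : Prop :=
  3 ≤ B.ncard ∧ (G.induce B).Connected ∧ ∀ v ∈ B, (G.induce (B \ {v})).Connected

/-
If `X` is a total mutual-visibility set of a connected non-complete graph, every vertex has a
non-neighbour or is adjacent to an internal vertex of a shortest path between two non-neighbours;
such internal vertices avoid `X`, and `X`-avoiding shortest paths also connect `Xᶜ`. So `Xᶜ` is a
connected dominating set and `μt(G) ≤ n(G) - γc(G)`. Conversely, `Sᶜ` is a total
mutual-visibility set exactly when every two vertices are joined by a shortest path with all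
internal vertices in `S`, so equality holds iff some minimum connected dominating set has this
property.
-/

namespace SimpleGraph

variable {V : Type*} {G : SimpleGraph V} {X : Set V}

theorem isTMVSet_compl_iff {S : Set V} :
    IsTMVSet G Sᶜ ↔ ∀ u v : V, ∃ q : G.Walk u v, q.length = G.dist u v ∧
      ∀ w ∈ q.support, w ≠ u → w ≠ v → w ∈ S := by
  simp only [IsTMVSet, Set.mem_compl_iff, not_not]

theorem Connected.isTMVSet_empty (hG : G.Connected) : IsTMVSet G ∅ := fun x y ↦
  (hG.exists_walk_length_eq_dist x y).imp fun _ hp ↦ ⟨hp, fun _ _ _ _ ↦ id⟩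

namespace IsTMVSet

theorem exists_adj_notMem (hX : IsTMVSet G X) {u w : V} (hne : u ≠ w) (hna : ¬ G.Adj u w) :
    ∃ b ∉ X, G.Adj u b := by
  obtain ⟨p, -, hint⟩ := hX u w
  cases p with
  | nil => exact absurd rfl hne
  | cons h q =>
    refine ⟨_, hint _ (by simp) h.ne' ?_, h⟩
    rintro rfl
    exact hna h

theorem isDomSet_compl (hX : IsTMVSet G X) (hnc : G ≠ ⊤) : IsDomSet G Xᶜ := by
  intro v hv
  by_cases huniv : ∀ w, w ≠ v → G.Adj v w
  · obtain ⟨u, w, hne, hna⟩ := ne_top_iff_exists_not_adj.mp hnc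
    obtain ⟨b, hb, -⟩ := hX.exists_adj_notMem hne hna
    have hbv : b ≠ v := by rintro rfl; exact hv hb
    exact ⟨b, hb, (huniv b hbv).symm⟩
  · push Not at huniv
    obtain ⟨w, hwv, hna⟩ := huniv
    obtain ⟨b, hb, hadj⟩ := hX.exists_adj_notMem hwv.symm hna
    exact ⟨b, hb, hadj.symm⟩

theorem exists_walk_support_subset_compl (hX : IsTMVSet G X) {u v : V} (hu : u ∉ X)
    (hv : v ∉ X) : ∃ p : G.Walk u v, {w | w ∈ p.support} ⊆ Xᶜ := by
  obtain ⟨p, -, hint⟩ := hX u v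
  refine ⟨p, fun w hw ↦ ?_⟩
  by_cases hwu : w = u
  · exact hwu ▸ hu
  by_cases hwv : w = v
  · exact hwv ▸ hv
  exact hint w hw hwu hwv

theorem connected_induce_compl (hX : IsTMVSet G X) (hne : Xᶜ.Nonempty) :
    (G.induce Xᶜ).Connected := by
  obtain ⟨u, hu⟩ := hne
  refine G.induce_connected_of_patches u hu fun hv ↦ ?_
  obtain ⟨p, hp⟩ := hX.exists_walk_support_subset_compl hu hv
  exact ⟨{w | w ∈ p.support}, hp, p.start_mem_support, p.end_mem_support,
    p.connected_induce_support.preconnected _ _⟩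

theorem isConnDomSet_compl (hX : IsTMVSet G X) (hnc : G ≠ ⊤) : IsConnDomSet G Xᶜ := by
  obtain ⟨u, w, hne, hna⟩ := ne_top_iff_exists_not_adj.mp hnc
  obtain ⟨b, hb, -⟩ := hX.exists_adj_notMem hne hna
  exact ⟨hX.isDomSet_compl hnc, hX.connected_induce_compl ⟨b, hb⟩⟩

end IsTMVSet

theorem gammaConnDom_le_ncard {D : Set V} (hD : IsConnDomSet G D) : gammaConnDom G ≤ D.ncard :=
  Nat.sInf_le ⟨D, hD, rfl⟩

theorem IsTMVSet.ncard_add_gammaConnDom_le [Finite V] (hX : IsTMVSet G X) (hnc : G ≠ ⊤) :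
    X.ncard + gammaConnDom G ≤ Nat.card V := by
  have := gammaConnDom_le_ncard (hX.isConnDomSet_compl hnc)
  have := Set.ncard_add_ncard_compl X
  omega

theorem bddAbove_tmvCards [Finite V] :
    BddAbove {n : ℕ | ∃ X : Set V, IsTMVSet G X ∧ X.ncard = n} :=
  ⟨Nat.card V, by rintro _ ⟨X, -, rfl⟩; exact Set.ncard_le_card X⟩

theorem IsTMVSet.ncard_le_muT [Finite V] (hX : IsTMVSet G X) : X.ncard ≤ muT G :=
  le_csSup bddAbove_tmvCards ⟨X, hX, rfl⟩

theorem Connected.exists_isTMVSet_ncard_eq_muT [Finite V] (hG : G.Connected) :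
    ∃ X : Set V, IsTMVSet G X ∧ X.ncard = muT G :=
  Nat.sSup_mem (s := {n : ℕ | ∃ X : Set V, IsTMVSet G X ∧ X.ncard = n})
    ⟨0, ∅, hG.isTMVSet_empty, Set.ncard_empty V⟩ bddAbove_tmvCards

end SimpleGraph

/-- Characterization of connected non-complete graphs with
`μt(G) = n(G) - γc(G)`. -/
theorem muT_eq_card_sub_gammaConnDom_iff {V : Type*} [Fintype V] (G : SimpleGraph V)
    (hG : G.Connected) (hnc : G ≠ ⊤) :
    muT G = Fintype.card V - gammaConnDom G ↔
      ∃ S : Set V, IsConnDomSet G S ∧ S.ncard = gammaConnDom G ∧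
        ∀ u v : V, ∃ q : G.Walk u v, q.length = G.dist u v ∧
          ∀ w ∈ q.support, w ≠ u → w ≠ v → w ∈ S := by
  obtain ⟨X, hX, hXmax⟩ := hG.exists_isTMVSet_ncard_eq_muT
  have hXbound := hX.ncard_add_gammaConnDom_le hnc
  have hcard (S : Set V) : S.ncard + Sᶜ.ncard = Fintype.card V := by
    rw [← Nat.card_eq_fintype_card]
    exact Set.ncard_add_ncard_compl S
  rw [Nat.card_eq_fintype_card] at hXbound
  constructor
  · intro hmu
    have hXc := gammaConnDom_le_ncard (hX.isConnDomSet_compl hnc)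
    have := hcard X
    refine ⟨Xᶜ, hX.isConnDomSet_compl hnc, by omega, isTMVSet_compl_iff.mp ?_⟩
    rwa [compl_compl]
  · rintro ⟨S, -, hScard, hvis⟩
    have := (isTMVSet_compl_iff.mpr hvis).ncard_le_muT
    have := hcard S
    omega
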